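/- arXiv:0807.1806 — 5 statements merged into one kernel-verified Lean document; each statement's English description precedes it below -/
import Mathlib

section
/- Let Ω = (0,1)×(0,1) and let w ∈ L²(Ω) with w not equal to 0 (as an element of L²). Then there exists an integer n such that limsup_{r → +∞} (ln |G(w)(r, nπ)|) / r ≥ −1, where the limsup is taken over real r → +∞. -/
open MeasureTheory Real Set Filter

/-- The open unit square `Ω = (0,1) × (0,1)`. -/
def unitSq : Set (ℝ × ℝ) := (Set.Ioo (0:ℝ) 1) ×ˢ (Set.Ioo (0:ℝ) 1)

/-- `G(w)(z, nπ) = ∫_Ω w(x,y) cosh(zx) cos(nπy) dx dy`. -/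
noncomputable def Gfun (w : ℝ × ℝ → ℝ) (n : ℤ) (z : ℂ) : ℂ :=
  ∫ p in unitSq, (w p : ℂ) * Complex.cosh (z * (p.1 : ℂ)) *
      Complex.cos ((n : ℂ) * (Real.pi : ℂ) * (p.2 : ℂ))

open scoped Nat unitInterval

/-!
If every `n` had `limsup < -1`, then `|G(w)(r, nπ)| ≤ e^{-r}` for large real `r`. As a function
of `z`, `G(w)(z, nπ)` is entire, even, of exponential type and bounded on the imaginary axis, so
Phragmén–Lindelöf applied to `e^z G` in the right half-plane bounds `G` there; evenness and
Liouville make `G` constant, and the decay makes it `0`. Its Taylor coefficients at `0` are the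
moments `∫ w x^{2j} cos(nπy)`, which therefore all vanish. By Stone–Weierstrass the functions
`x^{2j} cos(kπy)` span a dense subalgebra of `C([0,1]², ℝ)`, so `w` integrates to `0` against every
smooth compactly supported function, hence `w = 0` almost everywhere.
-/

section PowerSeries

variable {𝕜 : Type*} [NontriviallyNormedField 𝕜] [CompleteSpace 𝕜] {a : ℕ → 𝕜} {f : 𝕜 → 𝕜}

theorem hasFPowerSeriesOnBall_ofScalars_of_hasSum (h : ∀ z, HasSum (fun n => a n * z ^ n) (f z)) :
    HasFPowerSeriesOnBall f (FormalMultilinearSeries.ofScalars 𝕜 a) 0 ⊤ := by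
  set p := FormalMultilinearSeries.ofScalars 𝕜 a
  have hr : p.radius = ⊤ := ENNReal.eq_top_of_forall_nnreal_le fun r => by
    obtain ⟨z, hz⟩ := NormedField.exists_lt_norm 𝕜 r
    refine le_trans ?_ (p.le_radius_of_tendsto (r := ‖z‖₊) (l := 0) ?_)
    · exact_mod_cast hz.le
    · simpa [p, FormalMultilinearSeries.ofScalars_norm] using
        (h z).summable.tendsto_atTop_zero.norm
  have hsum := p.hasFPowerSeriesOnBall (hr ▸ ENNReal.zero_lt_top)
  rw [hr] at hsum
  refine hsum.congr fun z _ => ?_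
  simpa [p, FormalMultilinearSeries.sum, mul_comm] using (h z).tsum_eq

theorem differentiable_of_hasSum_mul_pow (h : ∀ z, HasSum (fun n => a n * z ^ n) (f z)) :
    Differentiable 𝕜 f := by
  simpa [Metric.eball_top, differentiableOn_univ] using
    (hasFPowerSeriesOnBall_ofScalars_of_hasSum h).differentiableOn

theorem eq_zero_of_hasSum_mul_pow_zero (h : ∀ z, HasSum (fun n => a n * z ^ n) 0) : a = 0 := by
  have hp := (hasFPowerSeriesOnBall_ofScalars_of_hasSum (f := 0) h).hasFPowerSeriesAt.eq_zero
  funext n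
  exact (FormalMultilinearSeries.ofScalars_eq_zero 𝕜 n).1 (by rw [hp]; rfl)

end PowerSeries

theorem eq_zero_of_even_of_norm_le_exp_neg {E : Type*} [NormedAddCommGroup E] [NormedSpace ℂ E]
    {f : ℂ → E} (hd : Differentiable ℂ f) (heven : ∀ z, f (-z) = f z) {A B C : ℝ}
    (hgrowth : ∀ z, ‖f z‖ ≤ A * rexp (B * ‖z‖)) (him : ∀ y : ℝ, ‖f (y * Complex.I)‖ ≤ C)
    (hdecay : ∀ᶠ r : ℝ in atTop, ‖f r‖ ≤ rexp (-r)) : f = 0 := by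
  set F : ℂ → E := fun z => Complex.exp z • f z
  have hF : ∀ z, ‖F z‖ = rexp z.re * ‖f z‖ := fun z => by
    simp only [F, norm_smul, Complex.norm_exp]
  have hFgrowth : ∀ z, ‖F z‖ ≤ A * rexp ((B + 1) * ‖z‖ ^ (1 : ℝ)) := fun z => by
    rw [hF, rpow_one, add_one_mul, exp_add]
    calc rexp z.re * ‖f z‖ ≤ rexp ‖z‖ * (A * rexp (B * ‖z‖)) := by
          gcongr
          · exact Complex.re_le_norm z
          · exact hgrowth z
      _ = A * (rexp (B * ‖z‖) * rexp ‖z‖) := by ring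
  have hright : ∀ z : ℂ, 0 ≤ z.re → ‖f z‖ ≤ C := fun z hz => by
    have hFC : ‖F z‖ ≤ C := by
      refine PhragmenLindelof.right_half_plane_of_bounded_on_real
        (Complex.differentiable_exp.smul hd).diffContOnCl
        ⟨1, one_lt_two, B + 1, .of_bound A (.of_forall fun z => ?_)⟩ ?_ (fun y => ?_) hz
      · simpa [abs_of_pos (exp_pos _)] using hFgrowth z
      · refine ⟨1, eventually_map.2 ?_⟩
        filter_upwards [hdecay] with r hr
        rw [hF, Complex.ofReal_re]
        calc rexp r * ‖f r‖ ≤ rexp r * rexp (-r) := by gcongr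
          _ = 1 := by rw [← exp_add, add_neg_cancel, exp_zero]
      · simpa [hF] using him y
    calc ‖f z‖ ≤ rexp z.re * ‖f z‖ := le_mul_of_one_le_left (norm_nonneg _) (one_le_exp hz)
      _ = ‖F z‖ := (hF z).symm
      _ ≤ C := hFC
  have hbdd : ∀ z, ‖f z‖ ≤ C := fun z => (le_total 0 z.re).elim (hright z) fun h => by
    simpa [heven] using hright (-z) (by simpa using h)
  have hconst : ∀ z, f z = f 0 := fun z =>
    hd.apply_eq_apply_of_bounded (isBounded_iff_forall_norm_le.2 ⟨C, forall_mem_range.2 hbdd⟩) z 0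
  have h0 : ‖f 0‖ ≤ 0 := ge_of_tendsto tendsto_exp_neg_atTop_nhds_zero
    (hdecay.mono fun r hr => hconst r ▸ hr)
  funext z
  rw [hconst z]
  exact norm_le_zero_iff.1 h0

theorem eventually_abs_le_exp_of_limsup_log_div_lt {u : ℝ → ℝ} {a : ℝ} (ha : a ≤ 0)
    (h : limsup (fun r => log (u r) / r) atTop < a) : ∀ᶠ r in atTop, |u r| ≤ rexp (a * r) := by
  -- an unbounded `limsup` in `ℝ` is the junk value `sInf ∅ = 0`, which is not `< a`
  have hbdd : IsBoundedUnder (· ≤ ·) atTop fun r => log (u r) / r := by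
    by_contra hnot
    rw [limsup_eq, show {b | ∀ᶠ r in atTop, log (u r) / r ≤ b} = ∅ from
      eq_empty_of_forall_notMem fun b hb => hnot ⟨b, hb⟩, Real.sInf_empty] at h
    linarith
  filter_upwards [eventually_lt_of_limsup_lt h hbdd, eventually_gt_atTop 0] with r hr hr0
  rcases eq_or_ne (u r) 0 with hu | hu
  · simpa [hu] using (exp_pos _).le
  · rw [← exp_log (abs_pos.2 hu), log_abs]
    exact exp_le_exp.2 ((div_lt_iff₀ hr0).1 hr).le

theorem hasSum_ite_even_cosh (ζ : ℂ) :
    HasSum (fun m : ℕ => if Even m then ζ ^ m / (m ! : ℂ) else 0) (Complex.cosh ζ) := by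
  have heven : HasSum (fun k : ℕ => if Even (2 * k) then ζ ^ (2 * k) / ((2 * k)! : ℂ) else 0)
      (Complex.cosh ζ) := by
    simpa only [even_two_mul, if_true] using Complex.hasSum_cosh ζ
  have hodd : HasSum
      (fun k : ℕ => if Even (2 * k + 1) then ζ ^ (2 * k + 1) / ((2 * k + 1)! : ℂ) else 0) 0 := by
    simpa only [Nat.not_even_two_mul_add_one, if_false] using hasSum_zero
  simpa using HasSum.even_add_odd
    (f := fun m : ℕ => if Even m then ζ ^ m / (m ! : ℂ) else 0) heven hodd

theorem norm_cosh_le_exp_norm (ζ : ℂ) : ‖Complex.cosh ζ‖ ≤ rexp ‖ζ‖ := by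
  rw [Complex.cosh, norm_div, Complex.norm_ofNat, div_le_iff₀ two_pos]
  calc ‖Complex.exp ζ + Complex.exp (-ζ)‖ ≤ ‖Complex.exp ζ‖ + ‖Complex.exp (-ζ)‖ := norm_add_le _ _
    _ ≤ rexp ‖ζ‖ + rexp ‖-ζ‖ :=
        add_le_add (Complex.norm_exp_le_exp_norm _) (Complex.norm_exp_le_exp_norm _)
    _ = rexp ‖ζ‖ * 2 := by rw [norm_neg]; ring

section CoshTransform

variable {X : Type*} [MeasurableSpace X] {μ : Measure X} {g : X → ℂ} {t : X → ℝ} {C : ℝ}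

noncomputable def coshTransform (μ : Measure X) (g : X → ℂ) (t : X → ℝ) (z : ℂ) : ℂ :=
  ∫ x, g x * Complex.cosh (z * t x) ∂μ

theorem coshTransform_neg (z : ℂ) : coshTransform μ g t (-z) = coshTransform μ g t z := by
  simp only [coshTransform, neg_mul, Complex.cosh_neg]

theorem norm_coshTransform_le (hg : Integrable g μ) (ht : ∀ᵐ x ∂μ, |t x| ≤ C) (z : ℂ) :
    ‖coshTransform μ g t z‖ ≤ (∫ x, ‖g x‖ ∂μ) * rexp (C * ‖z‖) := by
  rw [← integral_mul_const]
  refine norm_integral_le_of_norm_le (hg.norm.mul_const _) ?_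
  filter_upwards [ht] with x hx
  rw [norm_mul]
  gcongr
  refine (norm_cosh_le_exp_norm _).trans (exp_le_exp.2 ?_)
  rw [norm_mul, Complex.norm_real, norm_eq_abs, mul_comm]
  exact mul_le_mul_of_nonneg_right hx (norm_nonneg z)

theorem norm_coshTransform_mul_I_le (hg : Integrable g μ) (y : ℝ) :
    ‖coshTransform μ g t (y * Complex.I)‖ ≤ ∫ x, ‖g x‖ ∂μ := by
  refine norm_integral_le_of_norm_le hg.norm (ae_of_all _ fun x => ?_)
  rw [norm_mul]
  refine mul_le_of_le_one_right (norm_nonneg _) ?_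
  rw [show (y : ℂ) * Complex.I * t x = ((y * t x : ℝ) : ℂ) * Complex.I by push_cast; ring,
    Complex.cosh_mul_I, ← Complex.ofReal_cos, Complex.norm_real, norm_eq_abs]
  exact abs_cos_le_one _

theorem integrable_mul_pow (htm : AEStronglyMeasurable t μ) (ht : ∀ᵐ x ∂μ, |t x| ≤ C)
    (hg : Integrable g μ) (m : ℕ) :
    Integrable (fun x => g x * (t x : ℂ) ^ m) μ :=
  hg.mul_bdd ((Complex.continuous_ofReal.comp_aestronglyMeasurable htm).pow m)
    (ht.mono fun x hx => by simpa using pow_le_pow_left₀ (abs_nonneg _) hx m)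

theorem hasSum_coshTransform (htm : AEStronglyMeasurable t μ)
    (ht : ∀ᵐ x ∂μ, |t x| ≤ C) (hg : Integrable g μ) (z : ℂ) :
    HasSum (fun m : ℕ => (if Even m then (∫ x, g x * (t x : ℂ) ^ m ∂μ) / m ! else 0) * z ^ m)
      (coshTransform μ g t z) := by
  set c : ℕ → ℂ := fun m => if Even m then z ^ m / m ! else 0
  have hc : ∀ m, ‖c m‖ ≤ ‖z‖ ^ m / m ! := fun m => by
    by_cases hm : Even m
    · simp [c, hm]
    · simp only [c, hm, if_false, norm_zero]; positivity
  have hF : ∀ m, Integrable (fun x => c m * (g x * (t x : ℂ) ^ m)) μ := fun m =>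
    (integrable_mul_pow htm ht hg m).const_mul _
  have hsummable : Summable fun m => ∫ x, ‖c m * (g x * (t x : ℂ) ^ m)‖ ∂μ := by
    refine .of_nonneg_of_le (fun m => integral_nonneg fun x => norm_nonneg _) (fun m => ?_)
      ((summable_pow_div_factorial (‖z‖ * C)).mul_left (∫ x, ‖g x‖ ∂μ))
    calc ∫ x, ‖c m * (g x * (t x : ℂ) ^ m)‖ ∂μ
        ≤ ∫ x, ‖z‖ ^ m / m ! * (‖g x‖ * C ^ m) ∂μ := by
          refine integral_mono_ae (hF m).norm ((hg.norm.mul_const _).const_mul _) ?_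
          filter_upwards [ht] with x hx
          rw [norm_mul, norm_mul, norm_pow, Complex.norm_real, norm_eq_abs]
          gcongr
          exact hc m
      _ = (∫ x, ‖g x‖ ∂μ) * ((‖z‖ * C) ^ m / m !) := by
          rw [integral_const_mul, integral_mul_const, mul_pow]; ring
  have hpointwise : ∀ x, ∑' m, c m * (g x * (t x : ℂ) ^ m) = g x * Complex.cosh (z * t x) :=
    fun x => (((hasSum_ite_even_cosh (z * t x)).mul_left (g x)).congr_fun fun m => by
      by_cases hm : Even m
      · simp only [c, hm, if_true, mul_pow]; ring
      · simp only [c, hm, if_false, zero_mul, mul_zero]).tsum_eq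
  have key := hasSum_integral_of_summable_integral_norm hF hsummable
  simp only [hpointwise, integral_const_mul] at key
  refine key.congr_fun fun m => ?_
  by_cases hm : Even m
  · simp only [c, hm, if_true]; ring
  · simp only [c, hm, if_false, zero_mul]

theorem differentiable_coshTransform (htm : AEStronglyMeasurable t μ)
    (ht : ∀ᵐ x ∂μ, |t x| ≤ C) (hg : Integrable g μ) :
    Differentiable ℂ (coshTransform μ g t) :=
  differentiable_of_hasSum_mul_pow (hasSum_coshTransform htm ht hg)

theorem coshTransform_eq_zero_of_decay (htm : AEStronglyMeasurable t μ)
    (ht : ∀ᵐ x ∂μ, |t x| ≤ C) (hg : Integrable g μ)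
    (hdecay : ∀ᶠ r : ℝ in atTop, ‖coshTransform μ g t r‖ ≤ rexp (-r)) :
    coshTransform μ g t = 0 :=
  eq_zero_of_even_of_norm_le_exp_neg (differentiable_coshTransform htm ht hg) coshTransform_neg
    (norm_coshTransform_le hg ht) (norm_coshTransform_mul_I_le hg) hdecay

theorem integral_mul_pow_eq_zero_of_coshTransform_eq_zero (htm : AEStronglyMeasurable t μ)
    (ht : ∀ᵐ x ∂μ, |t x| ≤ C) (hg : Integrable g μ)
    (h0 : coshTransform μ g t = 0) {m : ℕ} (hm : Even m) :
    ∫ x, g x * (t x : ℂ) ^ m ∂μ = 0 := by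
  have := congrFun (eq_zero_of_hasSum_mul_pow_zero fun z =>
    h0 ▸ hasSum_coshTransform htm ht hg z) m
  simpa [hm, Nat.factorial_ne_zero] using this

end CoshTransform

section WeightedIntegral

variable {X K : Type*} [MeasurableSpace X] [TopologicalSpace X] [OpensMeasurableSpace X]
  [TopologicalSpace K] [CompactSpace K] {μ : Measure X} {w : X → ℝ}

theorem integrable_mul_comp (hw : Integrable w μ) (e : C(X, K)) (f : C(K, ℝ)) :
    Integrable (fun x => w x * f (e x)) μ :=
  hw.mul_bdd (f.continuous.comp e.continuous).aestronglyMeasurable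
    (ae_of_all _ fun x => f.norm_coe_le_norm (e x))

noncomputable def integralMulCompCLM (hw : Integrable w μ) (e : C(X, K)) : C(K, ℝ) →L[ℝ] ℝ :=
  LinearMap.mkContinuous
    { toFun := fun f => ∫ x, w x * f (e x) ∂μ
      map_add' := fun f f' => by
        simp only [ContinuousMap.add_apply, mul_add]
        exact integral_add (integrable_mul_comp hw e f) (integrable_mul_comp hw e f')
      map_smul' := fun c f => by
        simp only [ContinuousMap.smul_apply, smul_eq_mul, mul_left_comm _ c, integral_const_mul,
          RingHom.id_apply] }
    (∫ x, ‖w x‖ ∂μ) fun f => by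
      simp only [LinearMap.coe_mk, AddHom.coe_mk]
      rw [← integral_mul_const]
      refine norm_integral_le_of_norm_le (hw.norm.mul_const _) (ae_of_all _ fun x => ?_)
      rw [norm_mul]
      exact mul_le_mul_of_nonneg_left (f.norm_coe_le_norm (e x)) (norm_nonneg _)

end WeightedIntegral

theorem measurableSet_unitSq : MeasurableSet unitSq :=
  measurableSet_Ioo.prod measurableSet_Ioo

-- Stone–Weierstrass needs a compact space, so continuous functions on the closed square `I × I`
-- are integrated against `w` after clamping `ℝ × ℝ` onto it.
noncomputable def unitSqClamp : C(ℝ × ℝ, I × I) :=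
  ⟨fun p => (projIcc 0 1 zero_le_one p.1, projIcc 0 1 zero_le_one p.2), by fun_prop⟩

theorem coe_unitSqClamp {p : ℝ × ℝ} (hp : p ∈ unitSq) :
    (((unitSqClamp p).1 : ℝ), ((unitSqClamp p).2 : ℝ)) = p := by
  obtain ⟨h1, h2⟩ := hp
  simp [unitSqClamp, projIcc_of_mem _ (Ioo_subset_Icc_self h1),
    projIcc_of_mem _ (Ioo_subset_Icc_self h2)]

noncomputable def powCos (j : ℕ) (k : ℤ) : C(I × I, ℝ) :=
  ⟨fun q => (q.1 : ℝ) ^ (2 * j) * Real.cos (k * π * q.2), by fun_prop⟩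

theorem powCos_mul (j i : ℕ) (k l : ℤ) :
    powCos j k * powCos i l =
      (2⁻¹ : ℝ) • powCos (j + i) (k + l) + (2⁻¹ : ℝ) • powCos (j + i) (k - l) := by
  ext q
  simp only [powCos, ContinuousMap.mul_apply, ContinuousMap.add_apply, ContinuousMap.smul_apply,
    ContinuousMap.coe_mk, smul_eq_mul, Int.cast_add, Int.cast_sub, add_mul, sub_mul, cos_add,
    cos_sub]
  ring

noncomputable def powCosSubalgebra : Subalgebra ℝ C(I × I, ℝ) :=
  (Submodule.span ℝ (range (Function.uncurry powCos))).toSubalgebra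
    (Submodule.subset_span ⟨(0, 0), by ext; simp [powCos]⟩)
    fun f f' hf hf' => by
      have hmul := Submodule.mul_mem_mul hf hf'
      rw [Submodule.span_mul_span] at hmul
      refine Submodule.span_le.2 ?_ hmul
      rintro _ ⟨_, ⟨⟨j, k⟩, rfl⟩, _, ⟨⟨i, l⟩, rfl⟩, rfl⟩
      simp only [Function.uncurry_apply_pair, powCos_mul, SetLike.mem_coe]
      exact add_mem (Submodule.smul_mem _ _ (Submodule.subset_span ⟨(j + i, k + l), rfl⟩))
        (Submodule.smul_mem _ _ (Submodule.subset_span ⟨(j + i, k - l), rfl⟩))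

theorem powCosSubalgebra_separatesPoints : powCosSubalgebra.SeparatesPoints := by
  intro q q' hne
  have mem : ∀ j k, ⇑(powCos j k) ∈ (fun f : C(I × I, ℝ) => ⇑f) '' (powCosSubalgebra : Set _) :=
    fun j k => ⟨_, Submodule.subset_span ⟨(j, k), rfl⟩, rfl⟩
  by_cases h1 : q.1 = q'.1
  · refine ⟨_, mem 0 1, fun h => hne (Prod.ext h1 (Subtype.ext ?_))⟩
    have hmem : ∀ y : I, π * y ∈ Icc 0 π := fun y =>
      ⟨mul_nonneg pi_pos.le y.2.1, mul_le_of_le_one_right pi_pos.le y.2.2⟩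
    simp only [powCos, ContinuousMap.coe_mk, mul_zero, pow_zero, one_mul, Int.cast_one] at h
    exact mul_left_cancel₀ pi_ne_zero (injOn_cos (hmem q.2) (hmem q'.2) h)
  · refine ⟨_, mem 1 0, fun h => h1 (Subtype.ext ?_)⟩
    simp only [powCos, ContinuousMap.coe_mk, mul_one, Int.cast_zero, zero_mul, cos_zero] at h
    exact (pow_left_inj₀ q.1.2.1 q'.1.2.1 two_ne_zero).1 h

theorem ae_eq_zero_of_integral_mul_pow_mul_cos_eq_zero {w : ℝ × ℝ → ℝ}
    (hw : Integrable w (volume.restrict unitSq))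
    (h : ∀ (j : ℕ) (k : ℤ), ∫ p in unitSq, w p * (p.1 ^ (2 * j) * Real.cos (k * π * p.2)) = 0) :
    w =ᵐ[volume.restrict unitSq] 0 := by
  set Λ := integralMulCompCLM hw unitSqClamp
  have hΛ : ∀ (f : C(I × I, ℝ)) (F : ℝ × ℝ → ℝ), (∀ q : I × I, f q = F (q.1, q.2)) →
      Λ f = ∫ p in unitSq, w p * F p := fun f F hf =>
    setIntegral_congr_fun measurableSet_unitSq fun p hp => by
      simp only [hf, coe_unitSqClamp hp]
  have hdense : Dense (Submodule.span ℝ (range (Function.uncurry powCos)) : Set C(I × I, ℝ)) := by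
    rw [dense_iff_closure_eq]
    exact congrArg SetLike.coe
      (ContinuousMap.subalgebra_topologicalClosure_eq_top_of_separatesPoints
        powCosSubalgebra powCosSubalgebra_separatesPoints)
  have hΛ0 : Λ = 0 := ContinuousLinearMap.ext_on hdense fun _ ⟨⟨j, k⟩, hf⟩ =>
    hf ▸ (hΛ _ _ fun q => rfl).trans (h j k)
  refine ae_eq_zero_of_integral_contDiff_smul_eq_zero hw.locallyIntegrable fun F hF _ => ?_
  have := hΛ ⟨fun q => F (q.1, q.2), by fun_prop⟩ F fun q => rfl
  simpa [hΛ0, mul_comm] using this.symm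

instance isFiniteMeasure_restrict_unitSq : IsFiniteMeasure (volume.restrict unitSq) :=
  isFiniteMeasure_restrict.2
    ((Metric.isBounded_Ioo 0 1).prod (Metric.isBounded_Ioo 0 1)).measure_lt_top.ne

theorem ae_abs_fst_le_one : ∀ᵐ p ∂(volume.restrict unitSq), |p.1| ≤ 1 :=
  (ae_restrict_mem measurableSet_unitSq).mono fun _ hp =>
    abs_le.2 ⟨by linarith [hp.1.1], hp.1.2.le⟩

theorem integrable_ofReal_mul_cos {w : ℝ × ℝ → ℝ} (hw : Integrable w (volume.restrict unitSq))
    (n : ℤ) :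
    Integrable (fun p => (w p : ℂ) * Complex.cos (n * π * p.2)) (volume.restrict unitSq) :=
  hw.ofReal.mul_bdd (by fun_prop : Continuous _).aestronglyMeasurable (ae_of_all _ fun p => by
    rw [← Complex.ofReal_intCast, ← Complex.ofReal_mul, ← Complex.ofReal_mul, ← Complex.ofReal_cos,
      Complex.norm_real, norm_eq_abs]
    exact abs_cos_le_one _)

theorem Gfun_eq_coshTransform (w : ℝ × ℝ → ℝ) (n : ℤ) :
    Gfun w n = coshTransform (volume.restrict unitSq)
      (fun p => (w p : ℂ) * Complex.cos (n * π * p.2)) Prod.fst := by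
  funext z
  simp only [Gfun, coshTransform, mul_right_comm _ (Complex.cosh _)]

theorem Gfun_eq_zero_of_decay {w : ℝ × ℝ → ℝ} (hw : Integrable w (volume.restrict unitSq))
    (n : ℤ) (hdecay : ∀ᶠ r : ℝ in atTop, ‖Gfun w n r‖ ≤ rexp (-r)) : Gfun w n = 0 := by
  rw [Gfun_eq_coshTransform] at hdecay ⊢
  exact coshTransform_eq_zero_of_decay continuous_fst.aestronglyMeasurable ae_abs_fst_le_one
    (integrable_ofReal_mul_cos hw n) hdecay

theorem integral_mul_pow_mul_cos_eq_zero_of_Gfun_eq_zero {w : ℝ × ℝ → ℝ}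
    (hw : Integrable w (volume.restrict unitSq)) {k : ℤ} (hG : Gfun w k = 0) (j : ℕ) :
    ∫ p in unitSq, w p * (p.1 ^ (2 * j) * Real.cos (k * π * p.2)) = 0 := by
  rw [Gfun_eq_coshTransform] at hG
  have h := integral_mul_pow_eq_zero_of_coshTransform_eq_zero continuous_fst.aestronglyMeasurable
    ae_abs_fst_le_one (integrable_ofReal_mul_cos hw k) hG (even_two_mul j)
  rw [← Complex.ofReal_eq_zero, ← integral_complex_ofReal, ← h]
  congr 1
  funext p
  push_cast
  ring

/-- Lemma 2 (second part): if `w ∈ L²(Ω)` and `w ≢ 0`, then there exists an integer `n` such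
that `limsup_{r → +∞} ln |G(w)(r, nπ)| / r ≥ −1`. -/
theorem stmt3
    (w : ℝ × ℝ → ℝ)
    (hw : MemLp w 2 (MeasureTheory.volume.restrict unitSq))
    (hw0 : ¬ (w =ᵐ[MeasureTheory.volume.restrict unitSq] 0)) :
    ∃ n : ℤ, (-1 : ℝ) ≤
      Filter.limsup (fun r : ℝ => Real.log ‖Gfun w n (r : ℂ)‖ / r)
        Filter.atTop := by
  by_contra! hlim
  have hw1 : Integrable w (volume.restrict unitSq) := hw.integrable one_le_two
  have hG : ∀ n : ℤ, Gfun w n = 0 := fun n => Gfun_eq_zero_of_decay hw1 n <| by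
    simpa using eventually_abs_le_exp_of_limsup_log_div_lt (by norm_num) (hlim n)
  exact hw0 (ae_eq_zero_of_integral_mul_pow_mul_cos_eq_zero hw1 fun j k =>
    integral_mul_pow_mul_cos_eq_zero_of_Gfun_eq_zero hw1 (hG k) j)
end

section
/- Let T > 0 and let φ ∈ L¹(0,T) satisfy condition (H) with exponent θ ≥ 0. Then liminf_{λ → +∞} λ^{θ+1} |∫_0^T e^{−λt} φ(t) dt| > 0, where the liminf is over real λ → +∞. -/
/-!
Split `∫₀ᵀ = ∫₀^{T₀} + ∫_{T₀}^T`. On `(0, T₀)` the integrand `e^{-λt} φ(t)` has a fixed sign, and on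
the window `[1/λ, 2/λ]` it is at least `e^{-2} Λ λ^{-θ}` in absolute value, so `|∫₀^{T₀}|` is at
least `Λ e^{-2} λ^{-(θ+1)}`. The tail `|∫_{T₀}^T|` is at most `e^{-λT₀} ‖φ‖₁ = o(λ^{-(θ+1)})`.
-/

open MeasureTheory Real Set Filter Topology

lemma intervalIntegrable_exp_mul_rpow (l θ a b : ℝ) (hθ : 0 ≤ θ) :
    IntervalIntegrable (fun t => exp (-l * t) * t ^ θ) volume a b :=
  (ContinuousOn.mul (by fun_prop)
    (ContinuousOn.rpow_const continuousOn_id fun _ _ => Or.inr hθ)).intervalIntegrable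

lemma exp_neg_two_mul_inv_rpow_le {l t θ : ℝ} (hl : 0 < l) (hθ : 0 ≤ θ) (ht : t ∈ Icc (1 / l) (2 / l)) :
    exp (-2) * (l ^ θ)⁻¹ ≤ exp (-l * t) * t ^ θ := by
  have hlt : l * t ≤ 2 := by rw [← le_div_iff₀' hl]; exact ht.2
  have hexp : exp (-2) ≤ exp (-l * t) := exp_le_exp.mpr (by linarith)
  have hpow : (l ^ θ)⁻¹ ≤ t ^ θ := by
    rw [← inv_rpow hl.le, inv_eq_one_div]
    exact rpow_le_rpow (by positivity) ht.1 hθ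
  exact mul_le_mul hexp hpow (by positivity) (exp_pos _).le

lemma exp_neg_two_mul_inv_rpow_le_integral_exp_mul_rpow {l θ : ℝ} (hl : 0 < l) (hθ : 0 ≤ θ) :
    exp (-2) * (l ^ (θ + 1))⁻¹ ≤ ∫ t in (1 / l)..(2 / l), exp (-l * t) * t ^ θ := by
  have hle : 1 / l ≤ 2 / l := by gcongr; norm_num
  calc exp (-2) * (l ^ (θ + 1))⁻¹ = ∫ _ in (1 / l)..(2 / l), exp (-2) * (l ^ θ)⁻¹ := by
        rw [intervalIntegral.integral_const, smul_eq_mul, rpow_add_one hl.ne']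
        field_simp
        ring
    _ ≤ ∫ t in (1 / l)..(2 / l), exp (-l * t) * t ^ θ := by
        exact intervalIntegral.integral_mono_on hle intervalIntegrable_const
          (intervalIntegrable_exp_mul_rpow l θ _ _ hθ)
          (fun t ht => exp_neg_two_mul_inv_rpow_le hl hθ ht)

lemma mul_exp_neg_two_mul_inv_rpow_le_integral {φ : ℝ → ℝ} {l θ T₀ Λ : ℝ} (hl : 0 < l)
    (hθ : 0 ≤ θ) (hΛ : 0 ≤ Λ) (hlT₀ : 2 / l ≤ T₀) (hφ : IntervalIntegrable φ volume 0 T₀)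
    (hpos : ∀ᵐ t ∂volume.restrict (Ioo 0 T₀), Λ * t ^ θ ≤ φ t) :
    Λ * (exp (-2) * (l ^ (θ + 1))⁻¹) ≤ ∫ t in 0..T₀, exp (-l * t) * φ t := by
  have hT₀ : 0 ≤ T₀ := le_trans (by positivity) hlT₀
  have hg := intervalIntegrable_exp_mul_rpow l θ 0 T₀ hθ
  have hg_nonneg : 0 ≤ᵐ[volume.restrict (Ioc 0 T₀)] fun t => exp (-l * t) * t ^ θ := by
    refine (ae_restrict_iff' measurableSet_Ioc).mpr (.of_forall fun t ht => ?_)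
    have := rpow_nonneg ht.1.le θ
    positivity
  calc Λ * (exp (-2) * (l ^ (θ + 1))⁻¹)
      ≤ Λ * ∫ t in (1 / l)..(2 / l), exp (-l * t) * t ^ θ :=
        mul_le_mul_of_nonneg_left (exp_neg_two_mul_inv_rpow_le_integral_exp_mul_rpow hl hθ) hΛ
    _ ≤ Λ * ∫ t in 0..T₀, exp (-l * t) * t ^ θ := by
        gcongr
        exact intervalIntegral.integral_mono_interval (by positivity)
          (by gcongr; norm_num) hlT₀ hg_nonneg hg
    _ = ∫ t in 0..T₀, exp (-l * t) * (Λ * t ^ θ) := by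
        rw [← intervalIntegral.integral_const_mul]
        ring_nf
    _ ≤ ∫ t in 0..T₀, exp (-l * t) * φ t := by
        refine intervalIntegral.integral_mono_ae_restrict hT₀ (hg.const_mul Λ |>.congr ?_)
          (hφ.continuousOn_mul (by fun_prop)) ?_
        · exact fun t _ => by ring
        rw [Measure.restrict_congr_set Ioo_ae_eq_Icc.symm]
        filter_upwards [hpos] with t ht
        exact mul_le_mul_of_nonneg_left ht (exp_pos _).le

lemma abs_integral_exp_mul_le {φ : ℝ → ℝ} {l a b : ℝ} (hl : 0 ≤ l) (hab : a ≤ b)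
    (hφ : IntervalIntegrable φ volume a b) :
    |∫ t in a..b, exp (-l * t) * φ t| ≤ exp (-l * a) * ∫ t in a..b, |φ t| := by
  rw [← intervalIntegral.integral_const_mul, ← norm_eq_abs]
  refine intervalIntegral.norm_integral_le_of_norm_le hab (.of_forall fun t ht => ?_)
    (hφ.abs.const_mul _)
  rw [norm_mul, norm_of_nonneg (exp_pos _).le, norm_eq_abs]
  exact mul_le_mul_of_nonneg_right (exp_le_exp.mpr (by nlinarith [ht.1])) (abs_nonneg _)

lemma eventually_le_rpow_mul_integral_exp_mul {φ : ℝ → ℝ} {T T₀ Λ θ : ℝ} (hT₀ : 0 < T₀)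
    (hT₀T : T₀ ≤ T) (hΛ : 0 < Λ) (hθ : 0 ≤ θ) (hφ : IntervalIntegrable φ volume 0 T)
    (hpos : ∀ᵐ t ∂volume.restrict (Ioo 0 T₀), Λ * t ^ θ ≤ φ t) :
    ∀ᶠ l in atTop, Λ * exp (-2) / 2 ≤ l ^ (θ + 1) * ∫ t in 0..T, exp (-l * t) * φ t := by
  set C := ∫ t in T₀..T, |φ t|
  have hφ₁ : IntervalIntegrable φ volume 0 T₀ :=
    hφ.mono_set (uIcc_subset_uIcc left_mem_uIcc (mem_uIcc_of_le hT₀.le hT₀T))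
  have hφ₂ : IntervalIntegrable φ volume T₀ T :=
    hφ.mono_set (uIcc_subset_uIcc (mem_uIcc_of_le hT₀.le hT₀T) right_mem_uIcc)
  have htail : Tendsto (fun l => l ^ (θ + 1) * exp (-T₀ * l) * C) atTop (𝓝 0) := by
    simpa using (tendsto_rpow_mul_exp_neg_mul_atTop_nhds_zero (θ + 1) T₀ hT₀).mul_const C
  filter_upwards [htail.eventually_le_const (by positivity : 0 < Λ * exp (-2) / 2),
    eventually_gt_atTop 0, eventually_ge_atTop (2 / T₀)] with l hsmall hl hlT₀
  have hlT₀' : 2 / l ≤ T₀ := by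
    rw [div_le_iff₀ hl]; rw [div_le_iff₀ hT₀] at hlT₀; linarith
  have hhead := mul_exp_neg_two_mul_inv_rpow_le_integral hl hθ hΛ.le hlT₀' hφ₁ hpos
  have htail_le := abs_integral_exp_mul_le hl.le hT₀T hφ₂
  rw [← intervalIntegral.integral_add_adjacent_intervals
    (hφ₁.continuousOn_mul (by fun_prop)) (hφ₂.continuousOn_mul (by fun_prop))]
  set A := ∫ t in 0..T₀, exp (-l * t) * φ t
  set B := ∫ t in T₀..T, exp (-l * t) * φ t
  have hlθ : 0 < l ^ (θ + 1) := rpow_pos_of_pos hl _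
  have hA : Λ * exp (-2) ≤ l ^ (θ + 1) * A := by
    calc Λ * exp (-2) = l ^ (θ + 1) * (Λ * (exp (-2) * (l ^ (θ + 1))⁻¹)) := by field_simp
      _ ≤ l ^ (θ + 1) * A := mul_le_mul_of_nonneg_left hhead hlθ.le
  have hB : -(Λ * exp (-2) / 2) ≤ l ^ (θ + 1) * B := by
    calc -(Λ * exp (-2) / 2) ≤ -(l ^ (θ + 1) * exp (-T₀ * l) * C) := neg_le_neg hsmall
      _ ≤ -(l ^ (θ + 1) * |B|) := by
        rw [neg_le_neg_iff, mul_assoc, neg_mul, mul_comm T₀ l, ← neg_mul]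
        exact mul_le_mul_of_nonneg_left htail_le hlθ.le
      _ ≤ l ^ (θ + 1) * B := by
        rw [← mul_neg]; exact mul_le_mul_of_nonneg_left (neg_abs_le B) hlθ.le
  linarith [mul_add (l ^ (θ + 1)) A B]

lemma eventually_le_rpow_mul_abs_integral_exp_mul {φ : ℝ → ℝ} {T T₀ Λ θ : ℝ} (hT₀ : 0 < T₀)
    (hT₀T : T₀ ≤ T) (hΛ : 0 < Λ) (hθ : 0 ≤ θ) (hφ : IntervalIntegrable φ volume 0 T)
    (hsign : (∀ᵐ t ∂volume.restrict (Ioo 0 T₀), Λ * t ^ θ ≤ φ t) ∨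
      (∀ᵐ t ∂volume.restrict (Ioo 0 T₀), φ t ≤ -(Λ * t ^ θ))) :
    ∀ᶠ l in atTop, Λ * exp (-2) / 2 ≤ l ^ (θ + 1) * |∫ t in 0..T, exp (-l * t) * φ t| := by
  rcases hsign with hpos | hneg
  · filter_upwards [eventually_le_rpow_mul_integral_exp_mul hT₀ hT₀T hΛ hθ hφ hpos,
      eventually_gt_atTop 0] with l hl hl₀
    exact hl.trans (mul_le_mul_of_nonneg_left (le_abs_self _) (rpow_pos_of_pos hl₀ _).le)
  · have hneg' : ∀ᵐ t ∂volume.restrict (Ioo 0 T₀), Λ * t ^ θ ≤ -φ t := by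
      filter_upwards [hneg] with t ht
      linarith
    filter_upwards [eventually_le_rpow_mul_integral_exp_mul hT₀ hT₀T hΛ hθ hφ.neg hneg',
      eventually_gt_atTop 0] with l hl hl₀
    simp only [Pi.neg_apply, mul_neg, intervalIntegral.integral_neg] at hl
    rw [← mul_neg] at hl
    exact hl.trans (mul_le_mul_of_nonneg_left (neg_le_abs _) (rpow_pos_of_pos hl₀ _).le)

lemma zero_lt_liminf_coe_of_eventually_le {α : Type*} {F : Filter α} {f : α → ℝ} {c : ℝ}
    (hc : 0 < c) (hf : ∀ᶠ x in F, c ≤ f x) :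
    (0 : EReal) < liminf (fun x => (f x : EReal)) F :=
  calc (0 : EReal) < c := EReal.coe_pos.mpr hc
    _ ≤ _ := le_liminf_of_le (by isBoundedDefault) (hf.mono fun _ h => EReal.coe_le_coe h)

theorem stmt5_general
    (T : ℝ)
    (φ : ℝ → ℝ) (hφ : IntegrableOn φ (Set.Ioo 0 T))
    (θ : ℝ) (hθ : 0 ≤ θ)
    (hH : ∃ T₀ Λ : ℝ, T₀ ∈ Set.Ioc 0 T ∧ 0 < Λ ∧
      ((∀ᵐ t ∂(MeasureTheory.volume.restrict (Set.Ioo (0:ℝ) T₀)), Λ * t ^ θ ≤ φ t) ∨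
       (∀ᵐ t ∂(MeasureTheory.volume.restrict (Set.Ioo (0:ℝ) T₀)), φ t ≤ -(Λ * t ^ θ)))) :
    (0 : EReal) < Filter.liminf
      (fun l : ℝ =>
        ((l ^ (θ + 1) * |∫ t in (0:ℝ)..T, Real.exp (-l * t) * φ t| : ℝ) : EReal))
      Filter.atTop := by
  obtain ⟨T₀, Λ, ⟨hT₀, hT₀T⟩, hΛ, hsign⟩ := hH
  have hφ' : IntervalIntegrable φ volume 0 T :=
    (intervalIntegrable_iff_integrableOn_Ioo_of_le (hT₀.le.trans hT₀T)).mpr hφ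
  exact zero_lt_liminf_coe_of_eventually_le (by positivity)
    (eventually_le_rpow_mul_abs_integral_exp_mul hT₀ hT₀T hΛ hθ hφ' hsign)

/-- Lemma 3 (second part): if `φ ∈ L¹(0,T)` satisfies condition (H) with exponent `θ ≥ 0`, then
`liminf_{λ → +∞} λ^{θ+1} |∫₀ᵀ e^{−λt} φ(t) dt| > 0` (the liminf taken in the extended reals). -/
theorem stmt5
    (T : ℝ) (hT : 0 < T)
    (φ : ℝ → ℝ) (hφ : IntegrableOn φ (Set.Ioo 0 T))
    (θ : ℝ) (hθ : 0 ≤ θ)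
    (hH : ∃ T₀ Λ : ℝ, T₀ ∈ Set.Ioc 0 T ∧ 0 < Λ ∧
      ((∀ᵐ t ∂(MeasureTheory.volume.restrict (Set.Ioo (0:ℝ) T₀)), Λ * t ^ θ ≤ φ t) ∨
       (∀ᵐ t ∂(MeasureTheory.volume.restrict (Set.Ioo (0:ℝ) T₀)), φ t ≤ -(Λ * t ^ θ)))) :
    (0 : EReal) < Filter.liminf
      (fun l : ℝ =>
        ((l ^ (θ + 1) * |∫ t in (0:ℝ)..T, Real.exp (-l * t) * φ t| : ℝ) : EReal))
      Filter.atTop :=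
  stmt5_general T φ hφ θ hθ hH
end

section
/- Let T₀ > 0 and define Ψ_θ(λ) = λ^{θ+1} ∫_0^{T₀} e^{−λt} t^θ dt for λ > 0. Then for every θ ∈ [0,1), liminf_{λ → +∞} Ψ_θ(λ) ≥ 2^{θ−1}. -/
/-!
The substitution `s = λt` turns `Ψ_θ(λ)` into the lower incomplete gamma integral
`∫₀^{λT₀} e^{-s} sᶿ ds`, which tends to `Γ(θ + 1)` as `λ → ∞`, so the liminf is a limit.
Since `2` is a convex combination of `θ + 1` and `3`, log-convexity of `Γ` together with
`Γ(2) = 1` and `Γ(3) = 2` gives `1 ≤ Γ(θ + 1)^{1/(2-θ)} 2^{(1-θ)/(2-θ)}`,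
i.e. `Γ(θ + 1) ≥ 2^{θ-1}`.
-/

open MeasureTheory Real Set Filter

/-- `Ψ_θ(λ) = λ^{θ+1} ∫₀^{T₀} e^{−λt} tᶿ dt`. -/
noncomputable def Psi (T₀ θ l : ℝ) : ℝ :=
  l ^ (θ + 1) * ∫ t in (0:ℝ)..T₀, Real.exp (-l * t) * t ^ θ

theorem Psi_eq_integral_exp_neg_mul_rpow {T₀ : ℝ} (hT₀ : 0 ≤ T₀) (θ : ℝ) {l : ℝ}
    (hl : 0 < l) :
    Psi T₀ θ l = ∫ s in (0:ℝ)..l * T₀, exp (-s) * s ^ θ := by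
  have hsubst := intervalIntegral.integral_comp_mul_left
    (fun s => exp (-s) * s ^ θ) (a := 0) (b := T₀) hl.ne'
  rw [mul_zero, smul_eq_mul] at hsubst
  have hfactor : (∫ t in (0:ℝ)..T₀, exp (-(l * t)) * (l * t) ^ θ)
      = l ^ θ * ∫ t in (0:ℝ)..T₀, exp (-l * t) * t ^ θ := by
    rw [← intervalIntegral.integral_const_mul]
    refine intervalIntegral.integral_congr fun t ht => ?_
    rw [uIcc_of_le hT₀] at ht
    simp only [mul_rpow hl.le ht.1, neg_mul]
    ring
  rw [Psi, rpow_add_one hl.ne', mul_comm (l ^ θ) l, mul_assoc, ← hfactor, hsubst,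
    mul_inv_cancel_left₀ hl.ne']

theorem tendsto_Psi_atTop_Gamma {T₀ θ : ℝ} (hT₀ : 0 < T₀) (hθ : -1 < θ) :
    Tendsto (Psi T₀ θ) atTop (nhds (Gamma (θ + 1))) := by
  have hGamma : Gamma (θ + 1) = ∫ s in Ioi 0, exp (-s) * s ^ θ := by
    rw [Gamma_eq_integral (by linarith), add_sub_cancel_right]
  have hint : IntegrableOn (fun s => exp (-s) * s ^ θ) (Ioi 0) := by
    simpa using GammaIntegral_convergent (s := θ + 1) (by linarith)
  rw [hGamma]
  refine (intervalIntegral_tendsto_integral_Ioi 0 hint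
    (tendsto_id.atTop_mul_const hT₀)).congr' ?_
  filter_upwards [eventually_gt_atTop 0] with l hl
  exact (Psi_eq_integral_exp_neg_mul_rpow hT₀.le θ hl).symm

theorem two_rpow_sub_one_le_Gamma_add_one {θ : ℝ} (hθ0 : -1 < θ) (hθ1 : θ < 1) :
    (2 : ℝ) ^ (θ - 1) ≤ Gamma (θ + 1) := by
  have h2θ : 0 < 2 - θ := by linarith
  have hconv := Gamma_mul_add_mul_le_rpow_Gamma_mul_rpow_Gamma (s := θ + 1) (t := 3)
    (a := 1 / (2 - θ)) (b := (1 - θ) / (2 - θ)) (by linarith) (by norm_num)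
    (by positivity) (div_pos (by linarith) h2θ) (by field_simp; ring)
  have hΓ : 0 < Gamma (θ + 1) := Gamma_pos_of_pos (by linarith)
  have hG3 : Gamma 3 = 2 := by
    rw [show (3 : ℝ) = (2 : ℕ) + 1 by norm_num, Gamma_nat_eq_factorial]
    norm_num [Nat.factorial]
  rw [show 1 / (2 - θ) * (θ + 1) + (1 - θ) / (2 - θ) * 3 = 2 by field_simp; ring, Gamma_two,
    hG3] at hconv
  have hscaled : 1 ≤ Gamma (θ + 1) * 2 ^ (1 - θ) := by
    calc (1 : ℝ) ≤ (Gamma (θ + 1) ^ (1 / (2 - θ)) * 2 ^ ((1 - θ) / (2 - θ))) ^ (2 - θ) :=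
          one_le_rpow hconv h2θ.le
      _ = Gamma (θ + 1) * 2 ^ (1 - θ) := by
          rw [mul_rpow (by positivity) (by positivity), ← rpow_mul hΓ.le,
            ← rpow_mul zero_le_two]
          field_simp
          simp
  rw [show θ - 1 = -(1 - θ) by ring, rpow_neg zero_le_two]
  exact (inv_le_iff_one_le_mul₀ (by positivity)).2 hscaled

/-- `liminf_{λ → +∞} Ψ_θ(λ) ≥ 2^{θ−1}` for every `θ ∈ [0,1)`. -/
theorem stmt9 (T₀ : ℝ) (hT₀ : 0 < T₀) (θ : ℝ) (hθ0 : 0 ≤ θ) (hθ1 : θ < 1) :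
    (2 : ℝ) ^ (θ - 1) ≤ Filter.liminf (fun l : ℝ => Psi T₀ θ l) Filter.atTop := by
  rw [(tendsto_Psi_atTop_Gamma hT₀ (by linarith)).liminf_eq]
  exact two_rpow_sub_one_le_Gamma_add_one (by linarith) hθ1
end

section
/- For every integer r ≥ 1, ((4r+2)(4r+3)⋯(24r)) / ((10r−1)! · (10r)!) < e^{25r}; equivalently, (24r)! / ((4r+1)! · (10r−1)! · (10r)!) < e^{25r}. -/
open Real Finset
open scoped Nat

/-!
Since `(4r+1)! = (4r+1)·(4r)!` and `(10r-1)! = (10r)!/(10r)`, the quotient equals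
`10r/(4r+1) < 5/2` times the trinomial coefficient `(24r)!/((4r)!(10r)!(10r)!)`. Keeping one term
of the expansion of `(a+b)^(a+b)` gives `C(a+b, b)·a^a·b^b ≤ (a+b)^(a+b)`, so the trinomial
coefficient is at most `(24r)^(24r)/((4r)^(4r)(10r)^(20r)) = Q^r` with `Q = 24²⁴/(4⁴·10²⁰) ≈ e^24.68`.
The slack `(e²⁵/Q)^r` exceeds `5/2` once `r ≥ 3`; the cases `r = 1, 2` are checked numerically.
-/

theorem Nat.add_choose_mul_pow_mul_pow_le (x y : ℕ) :
    (x + y).choose y * (x ^ x * y ^ y) ≤ (x + y) ^ (x + y) :=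
  calc (x + y).choose y * (x ^ x * y ^ y)
      = x ^ x * y ^ (x + y - x) * (x + y).choose x := by
        rw [Nat.add_sub_cancel_left, Nat.choose_symm_add]; ring
    _ ≤ ∑ k ∈ range (x + y + 1), x ^ k * y ^ (x + y - k) * (x + y).choose k :=
        single_le_sum (f := fun k => x ^ k * y ^ (x + y - k) * (x + y).choose k)
          (fun _ _ => Nat.zero_le _) (by simp)
    _ = (x + y) ^ (x + y) := (add_pow x y _).symm

theorem Nat.factorial_mul_pow_le_pow_mul_factorial (a b c : ℕ) :
    (a + b + c)! * (a ^ a * b ^ b * c ^ c) ≤ (a + b + c) ^ (a + b + c) * (a ! * b ! * c !) := by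
  have hab := Nat.add_choose_mul_pow_mul_pow_le a b
  have habc := Nat.add_choose_mul_pow_mul_pow_le (a + b) c
  rw [← add_choose_mul_factorial_mul_factorial (a + b) c,
    ← add_choose_mul_factorial_mul_factorial a b]
  calc (a + b + c).choose c * ((a + b).choose b * a ! * b !) * c ! * (a ^ a * b ^ b * c ^ c)
      = (a + b + c).choose c * ((a + b).choose b * (a ^ a * b ^ b) * c ^ c)
          * (a ! * b ! * c !) := by ring
    _ ≤ (a + b + c).choose c * ((a + b) ^ (a + b) * c ^ c) * (a ! * b ! * c !) := by gcongr
    _ ≤ (a + b + c) ^ (a + b + c) * (a ! * b ! * c !) := by gcongr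

theorem factorial_div_factorial_mul_factorial_mul_factorial_le (r : ℕ) (hr : r ≠ 0) :
    ((24 * r)! : ℝ) / ((4 * r)! * (10 * r)! * (10 * r)!) ≤
      ((24 : ℝ) ^ 24 / (4 ^ 4 * 10 ^ 20)) ^ r := by
  have h := Nat.factorial_mul_pow_le_pow_mul_factorial (4 * r) (10 * r) (10 * r)
  rw [show 4 * r + 10 * r + 10 * r = 24 * r by ring] at h
  have hx : (r : ℝ) ≠ 0 := by exact_mod_cast hr
  have hQ : (24 : ℝ) ^ 24 / (4 ^ 4 * 10 ^ 20) =
      (24 * r) ^ 24 / ((4 * r) ^ 4 * (10 * r) ^ 10 * (10 * r) ^ 10) := by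
    field_simp
  rw [hQ, div_pow, mul_pow (_ * _), mul_pow ((4 * (r : ℝ)) ^ 4)]
  simp only [← pow_mul]
  rw [div_le_div_iff₀ (by positivity) (by positivity)]
  exact_mod_cast h

theorem factorial_div_eq_mul_factorial_div (r : ℕ) (hr : r ≠ 0) :
    ((24 * r)! : ℝ) / ((4 * r + 1)! * (10 * r - 1)! * (10 * r)!) =
      (10 * r) / (4 * r + 1) * (((24 * r)! : ℝ) / ((4 * r)! * (10 * r)! * (10 * r)!)) := by
  have h : ((10 * r)! : ℝ) = 10 * r * (10 * r - 1)! := by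
    rw [← Nat.mul_factorial_pred (by omega : 10 * r ≠ 0)]; push_cast; ring
  rw [h, Nat.factorial_succ]
  push_cast
  field_simp

theorem exp_natCast_gt_d9_pow (n : ℕ) (hn : n ≠ 0) : (2.7182818283 : ℝ) ^ n < exp n := by
  rw [← exp_one_pow]
  exact pow_lt_pow_left₀ exp_one_gt_d9 (by norm_num) hn

theorem five_halves_mul_pow_lt_exp (r : ℕ) (hr : 3 ≤ r) :
    5 / 2 * ((24 : ℝ) ^ 24 / (4 ^ 4 * 10 ^ 20)) ^ r < exp (25 * r) := by
  set Q : ℝ := 24 ^ 24 / (4 ^ 4 * 10 ^ 20) with hQ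
  have hQ_lt : Q < exp 25 := by
    have := exp_natCast_gt_d9_pow 25 (by norm_num)
    push_cast at this
    exact lt_trans (by norm_num [hQ]) this
  have hQ3_lt : 5 / 2 * Q ^ 3 < exp 75 := by
    have := exp_natCast_gt_d9_pow 75 (by norm_num)
    push_cast at this
    exact lt_trans (by norm_num [hQ]) this
  obtain ⟨s, rfl⟩ : ∃ s, r = s + 3 := ⟨r - 3, by omega⟩
  calc 5 / 2 * Q ^ (s + 3) = 5 / 2 * Q ^ 3 * Q ^ s := by ring
    _ < exp 75 * exp 25 ^ s :=
        mul_lt_mul hQ3_lt (pow_le_pow_left₀ (by positivity) hQ_lt.le s) (by positivity)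
          (by positivity)
    _ = exp (25 * ↑(s + 3)) := by
        rw [← exp_nat_mul, ← exp_add]; push_cast; ring_nf

/-- The estimate `J(r) < e^{25r}`:
`((4r+2)(4r+3)⋯(24r)) / ((10r−1)!(10r)!) = (24r)! / ((4r+1)!(10r−1)!(10r)!) < e^{25r}`. -/
theorem stmt12 (r : ℕ) (hr : 1 ≤ r) :
    (((24 * r).factorial : ℝ) /
        (((4 * r + 1).factorial : ℝ) * ((10 * r - 1).factorial : ℝ) *
          ((10 * r).factorial : ℝ)))
      < Real.exp (25 * (r : ℝ)) := by
  rcases lt_or_ge r 3 with hsmall | hlarge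
  · have h25 := exp_natCast_gt_d9_pow 25 (by norm_num)
    have h50 := exp_natCast_gt_d9_pow 50 (by norm_num)
    interval_cases r <;> norm_num [Nat.factorial] at h25 h50 ⊢ <;> linarith
  · rw [factorial_div_eq_mul_factorial_div r (by omega)]
    calc _ ≤ (10 * r) / (4 * r + 1) * ((24 : ℝ) ^ 24 / (4 ^ 4 * 10 ^ 20)) ^ r := by
          gcongr; exact factorial_div_factorial_mul_factorial_mul_factorial_le r (by omega)
      _ < 5 / 2 * ((24 : ℝ) ^ 24 / (4 ^ 4 * 10 ^ 20)) ^ r := by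
          refine mul_lt_mul_of_pos_right ?_ (by positivity)
          rw [div_lt_iff₀ (by positivity)]; linarith
      _ < exp (25 * r) := five_halves_mul_pow_lt_exp r hlarge
end

section
/- Define u(x,y,t) = sin(πt) cos(πx) cos(πy) and f(x,y) = cos(πx) cos(πy). Then for all (x,y) ∈ [0,1]² and t ∈ ℝ: (i) u_t − Δu = (π cos(πt) + 2π² sin(πt)) f(x,y), where Δ is the Laplacian in (x,y); (ii) u_x(0,y,t) = u_x(1,y,t) = u_y(x,0,t) = u_y(x,1,t) = 0; (iii) u(x,y,0) = 0 and u(x,y,1) = 0. In particular, the heat system u_t − Δu = (π cos(πt) + 2π² sin(πt)) f with homogeneous Neumann boundary conditions, zero initial data and zero final data at time T = 1 admits the nontrivial solution (u, f) in addition to the trivial solution (0, 0). -/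
open Real Set

/-- `u(x,y,t) = sin(πt) cos(πx) cos(πy)`. -/
noncomputable def uEx (x y t : ℝ) : ℝ :=
  Real.sin (Real.pi * t) * Real.cos (Real.pi * x) * Real.cos (Real.pi * y)

/-- `f(x,y) = cos(πx) cos(πy)`. -/
noncomputable def fEx (x y : ℝ) : ℝ := Real.cos (Real.pi * x) * Real.cos (Real.pi * y)

lemma hd_cos (x : ℝ) : HasDerivAt (fun s => Real.cos (Real.pi * s))
    (-(Real.pi * Real.sin (Real.pi * x))) x := by
  have h1 : HasDerivAt (fun s : ℝ => Real.pi * s) Real.pi x := by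
    simpa using (hasDerivAt_id x).const_mul Real.pi
  simpa [mul_comm] using h1.cos

lemma hd_sin (x : ℝ) : HasDerivAt (fun s => Real.sin (Real.pi * s))
    (Real.pi * Real.cos (Real.pi * x)) x := by
  have h1 : HasDerivAt (fun s : ℝ => Real.pi * s) Real.pi x := by
    simpa using (hasDerivAt_id x).const_mul Real.pi
  simpa [mul_comm] using h1.sin

lemma deriv_x (y t x : ℝ) :
    deriv (fun s' => uEx s' y t) x
      = Real.sin (Real.pi * t) * (-(Real.pi * Real.sin (Real.pi * x))) * Real.cos (Real.pi * y) := by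
  have h : HasDerivAt (fun s' => uEx s' y t)
      (Real.sin (Real.pi * t) * (-(Real.pi * Real.sin (Real.pi * x))) * Real.cos (Real.pi * y)) x := by
    simpa [uEx] using (((hd_cos x).const_mul (Real.sin (Real.pi * t))).mul_const
      (Real.cos (Real.pi * y)))
  exact h.deriv

lemma deriv_y (x t y : ℝ) :
    deriv (fun s' => uEx x s' t) y
      = Real.sin (Real.pi * t) * Real.cos (Real.pi * x) * (-(Real.pi * Real.sin (Real.pi * y))) := by
  have h : HasDerivAt (fun s' => uEx x s' t)
      (Real.sin (Real.pi * t) * Real.cos (Real.pi * x) * (-(Real.pi * Real.sin (Real.pi * y)))) y := by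
    have := (hd_cos y).const_mul (Real.sin (Real.pi * t) * Real.cos (Real.pi * x))
    simpa [uEx, mul_assoc] using this
  exact h.deriv

/-- Remark 3: `(u, f)` with `u = sin(πt) cos(πx) cos(πy)`, `f = cos(πx) cos(πy)` is a nontrivial
solution of the heat system `u_t − Δu = (π cos(πt) + 2π² sin(πt)) f` with homogeneous Neumann
boundary conditions, zero initial data and zero final data at `T = 1`. -/
theorem stmt18 :
    -- (i) the heat equation u_t − Δu = (π cos(πt) + 2π² sin(πt)) f(x,y)
    (∀ x ∈ Set.Icc (0:ℝ) 1, ∀ y ∈ Set.Icc (0:ℝ) 1, ∀ t : ℝ,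
      deriv (fun s => uEx x y s) t
          - (deriv (fun s => deriv (fun s' => uEx s' y t) s) x
            + deriv (fun s => deriv (fun s' => uEx x s' t) s) y)
        = (Real.pi * Real.cos (Real.pi * t) + 2 * Real.pi ^ 2 * Real.sin (Real.pi * t))
            * fEx x y) ∧
    -- (ii) homogeneous Neumann boundary conditions
    (∀ y ∈ Set.Icc (0:ℝ) 1, ∀ t : ℝ,
      deriv (fun s => uEx s y t) 0 = 0 ∧ deriv (fun s => uEx s y t) 1 = 0) ∧
    (∀ x ∈ Set.Icc (0:ℝ) 1, ∀ t : ℝ,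
      deriv (fun s => uEx x s t) 0 = 0 ∧ deriv (fun s => uEx x s t) 1 = 0) ∧
    -- (iii) zero initial and final data
    (∀ x ∈ Set.Icc (0:ℝ) 1, ∀ y ∈ Set.Icc (0:ℝ) 1, uEx x y 0 = 0 ∧ uEx x y 1 = 0) ∧
    -- the solution is nontrivial
    (∃ x ∈ Set.Icc (0:ℝ) 1, ∃ y ∈ Set.Icc (0:ℝ) 1, ∃ t ∈ Set.Icc (0:ℝ) 1,
      uEx x y t ≠ 0) ∧
    (∃ x ∈ Set.Icc (0:ℝ) 1, ∃ y ∈ Set.Icc (0:ℝ) 1, fEx x y ≠ 0) := by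
  have hdt : ∀ x y t : ℝ, deriv (fun s => uEx x y s) t
      = Real.pi * Real.cos (Real.pi * t) * Real.cos (Real.pi * x) * Real.cos (Real.pi * y) := by
    intro x y t
    have h : HasDerivAt (fun s => uEx x y s)
        (Real.pi * Real.cos (Real.pi * t) * Real.cos (Real.pi * x) * Real.cos (Real.pi * y)) t := by
      simpa [uEx] using ((hd_sin t).mul_const (Real.cos (Real.pi * x))).mul_const
        (Real.cos (Real.pi * y))
    exact h.deriv
  have hdxx : ∀ x y t : ℝ, deriv (fun s => deriv (fun s' => uEx s' y t) s) x
      = Real.sin (Real.pi * t) * (-(Real.pi * (Real.pi * Real.cos (Real.pi * x))))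
        * Real.cos (Real.pi * y) := by
    intro x y t
    have he : (fun s => deriv (fun s' => uEx s' y t) s)
        = fun s => Real.sin (Real.pi * t) * (-(Real.pi * Real.sin (Real.pi * s)))
            * Real.cos (Real.pi * y) := by
      funext s; exact deriv_x y t s
    rw [he]
    have h : HasDerivAt (fun s => Real.sin (Real.pi * t) * (-(Real.pi * Real.sin (Real.pi * s)))
        * Real.cos (Real.pi * y))
        (Real.sin (Real.pi * t) * (-(Real.pi * (Real.pi * Real.cos (Real.pi * x))))
          * Real.cos (Real.pi * y)) x := by
      have := ((((hd_sin x).const_mul Real.pi).neg.const_mul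
        (Real.sin (Real.pi * t))).mul_const (Real.cos (Real.pi * y)))
      simpa [mul_comm, mul_assoc, mul_left_comm] using this
    exact h.deriv
  have hdyy : ∀ x y t : ℝ, deriv (fun s => deriv (fun s' => uEx x s' t) s) y
      = Real.sin (Real.pi * t) * Real.cos (Real.pi * x)
        * (-(Real.pi * (Real.pi * Real.cos (Real.pi * y)))) := by
    intro x y t
    have he : (fun s => deriv (fun s' => uEx x s' t) s)
        = fun s => Real.sin (Real.pi * t) * Real.cos (Real.pi * x)
            * (-(Real.pi * Real.sin (Real.pi * s))) := by
      funext s; exact deriv_y x t s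
    rw [he]
    have h : HasDerivAt (fun s => Real.sin (Real.pi * t) * Real.cos (Real.pi * x)
        * (-(Real.pi * Real.sin (Real.pi * s))))
        (Real.sin (Real.pi * t) * Real.cos (Real.pi * x)
          * (-(Real.pi * (Real.pi * Real.cos (Real.pi * y))))) y := by
      have := (((hd_sin y).const_mul Real.pi).neg.const_mul
        (Real.sin (Real.pi * t) * Real.cos (Real.pi * x)))
      simpa [mul_comm, mul_assoc, mul_left_comm] using this
    exact h.deriv
  refine ⟨?_, ?_, ?_, ?_, ?_, ?_⟩
  · intro x _ y _ t
    rw [hdt, hdxx, hdyy, fEx]; ring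
  · intro y _ t
    constructor <;> rw [deriv_x] <;> simp [Real.sin_pi]
  · intro x _ t
    constructor <;> rw [deriv_y] <;> simp [Real.sin_pi]
  · intro x _ y _
    constructor <;> simp [uEx, Real.sin_pi]
  · exact ⟨0, by norm_num, 0, by norm_num, 1/2, by norm_num,
      by norm_num [uEx, mul_one_div, Real.sin_pi_div_two]⟩
  · exact ⟨0, by norm_num, 0, by norm_num, by norm_num [fEx]⟩
end
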